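/- arXiv:2210.07306 — 2 statements merged into one kernel-verified Lean document; each statement's English description precedes it below -/
import Mathlib

section
/- For every m ≥ 0, ε > 0, and every (x, t) ∈ εℤ² with t > 0, the following two identities hold: (x+ε)((x−ε)² − t²)·ã₁(x−2ε, t, m, ε) + (x−ε)((x+ε)² − t²)·ã₁(x+2ε, t, m, ε) = 2x((1+2m²ε²)(x²−ε²) − t²)·ã₁(x, t, m, ε), and (x+ε)((x−ε)² − (t+ε)²)·ã₂(x−2ε, t, m, ε) + (x−ε)((x+ε)² − (t−ε)²)·ã₂(x+2ε, t, m, ε) = 2x((1+2m²ε²)(x²−ε²) − t² + ε²)·ã₂(x, t, m, ε). -/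
open Complex Real Filter Asymptotics

noncomputable section

/-- Number of turns of the checker path with `T` moves whose set of indices of
rightward moves (among moves `0, …, T-1`) is `R`. -/
def turnsOf (T : ℕ) (R : Finset ℕ) : ℕ :=
  ((Finset.Ico 1 T).filter fun i => ¬((i ∈ R) ↔ (i - 1 ∈ R))).card

/-- The Feynman-checkers wave function on the integer lattice, with `μ = m·ε`:
`waveA X T μ = a(X·ε, T·ε, m, ε)`.  A checker path from `(0,0)` to `(X·ε, T·ε)`
consists of `T` moves, each `(ε,ε)` ("right") or `(-ε,ε)` ("left"); it is
determined by the set `R ⊆ {0,…,T-1}` of indices of its rightward moves.  The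
path ends at `X·ε` iff `R.card - (T - R.card) = X`, and its second point is
`(ε,ε)` iff `0 ∈ R`. -/
def waveA (X : ℤ) (T : ℕ) (μ : ℝ) : ℂ :=
  (((1 + μ ^ 2) ^ ((1 - (T : ℝ)) / 2) : ℝ) : ℂ) * Complex.I *
    ∑ R ∈ (Finset.range T).powerset,
      if 0 ∈ R ∧ 2 * (R.card : ℤ) - (T : ℤ) = X then
        (-Complex.I * (μ : ℂ)) ^ turnsOf T R
      else 0

/-- The wave function `a(x, t, m, ε)` for lattice points `(x,t) ∈ εℤ²`. -/
def wf (x t m ε : ℝ) : ℂ := waveA ⌊x / ε⌋ ⌊t / ε⌋.toNat (m * ε)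

/-- `ã₁(x, t, m, ε) = Re a(x, t+ε, m, ε)`. -/
def a1 (x t m ε : ℝ) : ℝ := (wf x (t + ε) m ε).re

/-- `ã₂(x, t, m, ε) = Im a(x+ε, t+ε, m, ε)`. -/
def a2 (x t m ε : ℝ) : ℝ := (wf (x + ε) (t + ε) m ε).im

end

/-!
A checker path starting with a rightward move alternates between nonempty blocks of rightward
and leftward moves. With `p` rightward and `q` leftward moves it has `2r + 1` turns when there
are `r + 1` blocks of each kind, and `2r` turns when there are `r + 1` rightward and `r` leftward
blocks, so such paths are counted by products of numbers of compositions. Hence, up to the factor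
`(1 + μ²)^((1 - N)/2)`, the real and imaginary parts of the wave function at `(p - q, N = p + q)`
are the values at `-μ²` of `μ • oddTurnsPoly p q` and `evenTurnsPoly p q`. Both identities become
three-term relations between these polynomials at `(p - 1, q + 1)`, `(p, q)` and `(p + 1, q - 1)`,
which are checked coefficient by coefficient using only Pascal's rule and the ratio of consecutive
binomial coefficients.
-/

namespace FeynmanCheckers

open Finset Polynomial

def numCompositions : ℕ → ℕ → ℕ
  | 0, 0 => 1
  | 0, _ + 1 => 0
  | _ + 1, 0 => 0
  | n + 1, k + 1 => n.choose k

@[simp] lemma numCompositions_zero_zero : numCompositions 0 0 = 1 := rfl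

@[simp] lemma numCompositions_zero_succ (k : ℕ) : numCompositions 0 (k + 1) = 0 := rfl

@[simp] lemma numCompositions_succ_zero (n : ℕ) : numCompositions (n + 1) 0 = 0 := rfl

@[simp] lemma numCompositions_succ_succ (n k : ℕ) :
    numCompositions (n + 1) (k + 1) = n.choose k := rfl

lemma numCompositions_zero_right (n : ℕ) : numCompositions n 0 = if n = 0 then 1 else 0 := by
  cases n <;> rfl

lemma numCompositions_one (n : ℕ) : numCompositions n 1 = if n = 0 then 0 else 1 := by
  cases n <;> simp

lemma numCompositions_eq_zero_of_lt {n k : ℕ} (h : n < k) : numCompositions n k = 0 := by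
  obtain _ | n := n
  · obtain _ | k := k <;> simp_all
  · obtain _ | k := k
    · omega
    · exact Nat.choose_eq_zero_of_lt (by omega)

lemma numCompositions_succ_succ_eq_add (n k : ℕ) :
    numCompositions (n + 1) (k + 1) = numCompositions n (k + 1) + numCompositions n k := by
  rcases n with _ | n <;> rcases k with _ | k
  · rfl
  · simp
  · simp
  · simp only [numCompositions_succ_succ, Nat.choose_succ_succ']
    omega

lemma numCompositions_succ_mul (n k : ℕ) :
    (numCompositions n (k + 1) : ℝ) * k = numCompositions n k * (n - k) := by
  obtain _ | n := n
  · cases k <;> simp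
  obtain _ | k := k
  · simp
  rcases le_or_gt k n with hk | hk
  · have := congrArg (Nat.cast : ℕ → ℝ) (Nat.choose_succ_right_eq n k)
    push_cast [Nat.cast_sub hk] at this
    simp only [numCompositions_succ_succ]
    push_cast
    linear_combination this
  · simp [Nat.choose_eq_zero_of_lt hk, Nat.choose_eq_zero_of_lt (show n < k + 1 by omega)]

-- Also for `n = 0`, where `n - 1` truncates to `0`: both sides vanish.
lemma pred_mul_numCompositions_pred (n k : ℕ) :
    ((n : ℝ) - 1) * numCompositions (n - 1) (k + 1) = numCompositions n (k + 1) * (n - 1 - k) := by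
  obtain _ | n := n
  · simp
  have hpascal : (numCompositions (n + 1) (k + 1) : ℝ) =
      numCompositions n (k + 1) + numCompositions n k := by
    exact_mod_cast numCompositions_succ_succ_eq_add n k
  rw [hpascal, Nat.add_sub_cancel]
  push_cast
  linear_combination numCompositions_succ_mul n k

lemma coeff_sum_range_C_mul_X_pow (f : ℕ → ℝ) (n k : ℕ) :
    (∑ r ∈ range n, C (f r) * X ^ r).coeff k = if k < n then f k else 0 := by
  simp [finsetSum_coeff]

/-- Coefficient `r` counts the checker paths starting rightward with `p` rightward moves,
`q` leftward moves and `2r + 1` turns (`r + 1` blocks of each kind); for `evenTurnsPoly` the paths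
have `2r` turns (`r` leftward blocks). -/
noncomputable def oddTurnsPoly (p q : ℕ) : ℝ[X] :=
  ∑ r ∈ range (p + 1), C ((numCompositions p (r + 1) * numCompositions q (r + 1) : ℕ) : ℝ) * X ^ r

noncomputable def evenTurnsPoly (p q : ℕ) : ℝ[X] :=
  ∑ r ∈ range (p + 1), C ((numCompositions p (r + 1) * numCompositions q r : ℕ) : ℝ) * X ^ r

@[simp] lemma coeff_oddTurnsPoly (p q r : ℕ) :
    (oddTurnsPoly p q).coeff r = (numCompositions p (r + 1) * numCompositions q (r + 1) : ℕ) := by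
  rw [oddTurnsPoly, coeff_sum_range_C_mul_X_pow]
  split_ifs with h
  · rfl
  · simp [numCompositions_eq_zero_of_lt (show p < r + 1 by omega)]

@[simp] lemma coeff_evenTurnsPoly (p q r : ℕ) :
    (evenTurnsPoly p q).coeff r = (numCompositions p (r + 1) * numCompositions q r : ℕ) := by
  rw [evenTurnsPoly, coeff_sum_range_C_mul_X_pow]
  split_ifs with h
  · rfl
  · simp [numCompositions_eq_zero_of_lt (show p < r + 1 by omega)]

@[simp] lemma oddTurnsPoly_zero_left (q : ℕ) : oddTurnsPoly 0 q = 0 := by ext; simp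

@[simp] lemma oddTurnsPoly_zero_right (p : ℕ) : oddTurnsPoly p 0 = 0 := by ext; simp

@[simp] lemma evenTurnsPoly_zero_left (q : ℕ) : evenTurnsPoly 0 q = 0 := by ext; simp

lemma evenTurnsPoly_succ_zero (p : ℕ) : evenTurnsPoly (p + 1) 0 = 1 := by
  ext (_ | r) <;> simp [coeff_one]

lemma evenTurnsPoly_succ_one (p : ℕ) : evenTurnsPoly (p + 1) 1 = C (p : ℝ) * X := by
  ext (_ | _ | r) <;> simp [coeff_X]

lemma evenTurnsPoly_succ_left {p q : ℕ} (h : p + q ≠ 0) :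
    evenTurnsPoly (p + 1) q = evenTurnsPoly p q + X * oddTurnsPoly p q := by
  ext (_ | r)
  · rcases p with _ | p <;> rcases q with _ | q <;> simp_all
  · simp only [coeff_add, coeff_X_mul, coeff_evenTurnsPoly, coeff_oddTurnsPoly,
      numCompositions_succ_succ_eq_add p (r + 1)]
    push_cast; ring

lemma oddTurnsPoly_succ_right (p q : ℕ) :
    oddTurnsPoly p (q + 1) = oddTurnsPoly p q + evenTurnsPoly p q := by
  ext r
  simp only [coeff_add, coeff_evenTurnsPoly, coeff_oddTurnsPoly,
    numCompositions_succ_succ_eq_add q r]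
  push_cast; ring

lemma oddTurnsPoly_three_term_coeff_succ (p q r : ℕ) :
    (q : ℝ) * (p - q + 1) * (p - 1) *
        (numCompositions (p - 1) (r + 2) * numCompositions (q + 1) (r + 2) : ℕ) +
      (p : ℝ) * (p - q - 1) * (q - 1) *
        (numCompositions (p + 1) (r + 2) * numCompositions (q - 1) (r + 2) : ℕ) =
      ((p : ℝ) - q) * (2 * p * q - p - q + 1) *
          (numCompositions p (r + 2) * numCompositions q (r + 2) : ℕ) +
        ((p : ℝ) - q) * ((p - q) ^ 2 - 1) *
          (numCompositions p (r + 1) * numCompositions q (r + 1) : ℕ) := by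
  have hr : (r : ℝ) + 1 ≠ 0 := by positivity
  have ratio (n : ℕ) : (numCompositions n (r + 2) : ℝ) =
      numCompositions n (r + 1) * (n - (r + 1)) / (r + 1) := by
    rw [eq_div_iff hr]; exact_mod_cast numCompositions_succ_mul n (r + 1)
  have pascal (n : ℕ) : (numCompositions (n + 1) (r + 2) : ℝ) =
      numCompositions n (r + 2) + numCompositions n (r + 1) := by
    exact_mod_cast numCompositions_succ_succ_eq_add n (r + 1)
  push_cast
  calc _ = (q : ℝ) * (p - q + 1) * (((p : ℝ) - 1) * numCompositions (p - 1) (r + 1 + 1)) *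
          numCompositions (q + 1) (r + 2) +
        (p : ℝ) * (p - q - 1) * numCompositions (p + 1) (r + 2) *
          (((q : ℝ) - 1) * numCompositions (q - 1) (r + 1 + 1)) := by
        ring
    _ = _ := by
      rw [pred_mul_numCompositions_pred, pred_mul_numCompositions_pred, pascal, pascal,
        ratio p, ratio q]
      push_cast
      field_simp
      ring

lemma evenTurnsPoly_three_term_coeff_succ (p q r : ℕ) :
    ((p : ℝ) - q) * (q + 1) * (p - 1) *
        (numCompositions (p - 1) (r + 2) * numCompositions (q + 1) (r + 1) : ℕ) +
      ((p : ℝ) - q - 2) * (q - 1) * (p - 1) *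
        (numCompositions (p + 1) (r + 2) * numCompositions (q - 1) (r + 1) : ℕ) =
      2 * (q : ℝ) * (p - 1) * (p - q - 1) *
          (numCompositions p (r + 2) * numCompositions q (r + 1) : ℕ) +
        ((p : ℝ) - q - 1) * (p - q) * (p - q - 2) *
          (numCompositions p (r + 1) * numCompositions q r : ℕ) := by
  have hr : (r : ℝ) + 1 ≠ 0 := by positivity
  have hratio_p : (numCompositions p (r + 2) : ℝ) =
      numCompositions p (r + 1) * (p - (r + 1)) / (r + 1) := by
    rw [eq_div_iff hr]; exact_mod_cast numCompositions_succ_mul p (r + 1)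
  have hratio_q := numCompositions_succ_mul q r
  have pascal (n k : ℕ) : (numCompositions (n + 1) (k + 1) : ℝ) =
      numCompositions n (k + 1) + numCompositions n k := by
    exact_mod_cast numCompositions_succ_succ_eq_add n k
  push_cast
  calc _ = ((p : ℝ) - q) * (q + 1) * (((p : ℝ) - 1) * numCompositions (p - 1) (r + 1 + 1)) *
          numCompositions (q + 1) (r + 1) +
        ((p : ℝ) - q - 2) * (p - 1) * numCompositions (p + 1) (r + 1 + 1) *
          (((q : ℝ) - 1) * numCompositions (q - 1) (r + 1)) := by
        ring
    _ = _ := by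
      rw [pred_mul_numCompositions_pred, pred_mul_numCompositions_pred, pascal, pascal,
        hratio_p]
      push_cast
      field_simp
      -- `hratio_q` cannot be divided by `r`, which may vanish. Its multiplier is the coefficient of
      -- `numCompositions q r` left over at this point, divided by `r - q`.
      linear_combination
        (-((p : ℝ) - q) * ((q + 1) * (2 * p - q - r - 3) + (p - q - 1) * (p - q - 2)) *
          numCompositions p (r + 1)) * hratio_q

lemma oddTurnsPoly_three_term_coeff_zero (p q : ℕ) :
    (q : ℝ) * (p - q + 1) * (p - 1) *
        (numCompositions (p - 1) 1 * numCompositions (q + 1) 1 : ℕ) +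
      (p : ℝ) * (p - q - 1) * (q - 1) *
        (numCompositions (p + 1) 1 * numCompositions (q - 1) 1 : ℕ) =
      ((p : ℝ) - q) * (2 * p * q - p - q + 1) *
        (numCompositions p 1 * numCompositions q 1 : ℕ) := by
  rcases p with _ | _ | p <;> rcases q with _ | _ | q <;>
    simp [numCompositions_one] <;> ring

lemma evenTurnsPoly_three_term_coeff_zero (p q : ℕ) (hq : q ≠ 0) :
    ((p : ℝ) - q) * (q + 1) * (p - 1) *
        (numCompositions (p - 1) 1 * numCompositions (q + 1) 0 : ℕ) +
      ((p : ℝ) - q - 2) * (q - 1) * (p - 1) *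
        (numCompositions (p + 1) 1 * numCompositions (q - 1) 0 : ℕ) =
      2 * (q : ℝ) * (p - 1) * (p - q - 1) *
        (numCompositions p 1 * numCompositions q 0 : ℕ) := by
  rcases q with _ | _ | q <;> simp_all [numCompositions_zero_right]

lemma oddTurnsPoly_three_term (p q : ℕ) :
    C ((q : ℝ) * (p - q + 1) * (p - 1)) * oddTurnsPoly (p - 1) (q + 1) +
        C ((p : ℝ) * (p - q - 1) * (q - 1)) * oddTurnsPoly (p + 1) (q - 1) =
      C (((p : ℝ) - q) * (2 * p * q - p - q + 1)) * oddTurnsPoly p q +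
        C (((p : ℝ) - q) * ((p - q) ^ 2 - 1)) * (X * oddTurnsPoly p q) := by
  ext (_ | r)
  · simpa only [coeff_add, coeff_C_mul, coeff_X_mul_zero, mul_zero, add_zero, coeff_oddTurnsPoly]
      using oddTurnsPoly_three_term_coeff_zero p q
  · simpa only [coeff_add, coeff_C_mul, coeff_X_mul, coeff_oddTurnsPoly]
      using oddTurnsPoly_three_term_coeff_succ p q r

lemma evenTurnsPoly_three_term (p q : ℕ) (hq : q ≠ 0) :
    C (((p : ℝ) - q) * (q + 1) * (p - 1)) * evenTurnsPoly (p - 1) (q + 1) +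
        C (((p : ℝ) - q - 2) * (q - 1) * (p - 1)) * evenTurnsPoly (p + 1) (q - 1) =
      C (2 * (q : ℝ) * (p - 1) * (p - q - 1)) * evenTurnsPoly p q +
        C (((p : ℝ) - q - 1) * (p - q) * (p - q - 2)) * (X * evenTurnsPoly p q) := by
  ext (_ | r)
  · simpa only [coeff_add, coeff_C_mul, coeff_X_mul_zero, mul_zero, add_zero, coeff_evenTurnsPoly]
      using evenTurnsPoly_three_term_coeff_zero p q hq
  · simpa only [coeff_add, coeff_C_mul, coeff_X_mul, coeff_evenTurnsPoly]
      using evenTurnsPoly_three_term_coeff_succ p q r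

lemma turnsOf_succ {N : ℕ} (hN : N ≠ 0) {R : Finset ℕ} (hR : R ⊆ range N) :
    turnsOf (N + 1) R = turnsOf N R + if N - 1 ∈ R then 1 else 0 := by
  have hNR : N ∉ R := fun h => by simpa using hR h
  unfold turnsOf
  rw [Nat.Ico_succ_right_eq_insert_Ico (by omega), filter_insert]
  split_ifs <;> simp_all

lemma turnsOf_succ_insert {N : ℕ} (hN : N ≠ 0) {R : Finset ℕ} (hR : R ⊆ range N) :
    turnsOf (N + 1) (insert N R) = turnsOf N R + if N - 1 ∈ R then 0 else 1 := by
  have hNR : N ∉ R := fun h => by simpa using hR h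
  have hfilter : (Ico 1 N).filter (fun i => ¬((i ∈ insert N R) ↔ (i - 1 ∈ insert N R))) =
      (Ico 1 N).filter (fun i => ¬((i ∈ R) ↔ (i - 1 ∈ R))) := by
    refine filter_congr fun i hi => ?_
    simp only [mem_Ico] at hi
    simp [mem_insert, show i ≠ N by omega, show i - 1 ≠ N by omega]
  unfold turnsOf
  rw [Nat.Ico_succ_right_eq_insert_Ico (by omega), filter_insert, hfilter]
  split_ifs <;> simp_all [show N - 1 ≠ N by omega]

noncomputable def rightEndSum (z : ℂ) (N p : ℕ) : ℂ :=
  ∑ R ∈ (range N).powerset, if 0 ∈ R ∧ N - 1 ∈ R ∧ #R = p then z ^ turnsOf N R else 0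

noncomputable def leftEndSum (z : ℂ) (N p : ℕ) : ℂ :=
  ∑ R ∈ (range N).powerset, if 0 ∈ R ∧ N - 1 ∉ R ∧ #R = p then z ^ turnsOf N R else 0

lemma rightEndSum_zero_right (z : ℂ) (N : ℕ) : rightEndSum z N 0 = 0 :=
  sum_eq_zero fun R _ => if_neg fun ⟨h0, _, hR⟩ => by simp_all

lemma leftEndSum_zero_right (z : ℂ) (N : ℕ) : leftEndSum z N 0 = 0 :=
  sum_eq_zero fun R _ => if_neg fun ⟨h0, _, hR⟩ => by simp_all

lemma leftEndSum_self (z : ℂ) (N : ℕ) : leftEndSum z N N = 0 := by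
  refine sum_eq_zero fun R hR => if_neg fun ⟨h0, hN, hcard⟩ => hN ?_
  have hsub := mem_powerset.mp hR
  rw [eq_of_subset_of_card_le hsub (by simp [hcard])]
  have := hsub h0
  simp_all

lemma rightEndSum_one (z : ℂ) (p : ℕ) : rightEndSum z 1 p = if p = 1 then 1 else 0 := by
  rw [rightEndSum, show range 1 = insert 0 ∅ from rfl, sum_powerset_insert (notMem_empty 0),
    powerset_empty, sum_singleton, sum_singleton]
  simp [turnsOf, eq_comm]

lemma leftEndSum_one (z : ℂ) (p : ℕ) : leftEndSum z 1 p = 0 := by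
  rw [leftEndSum, show range 1 = insert 0 ∅ from rfl, sum_powerset_insert (notMem_empty 0)]
  simp

lemma rightEndSum_succ_succ (z : ℂ) {N : ℕ} (hN : N ≠ 0) (p : ℕ) :
    rightEndSum z (N + 1) (p + 1) = rightEndSum z N p + z * leftEndSum z N p := by
  rw [rightEndSum, range_add_one, sum_powerset_insert notMem_range_self]
  have hlast : ∑ R ∈ (range N).powerset,
      (if 0 ∈ R ∧ N + 1 - 1 ∈ R ∧ #R = p + 1 then z ^ turnsOf (N + 1) R else 0) = 0 :=
    sum_eq_zero fun R hR => if_neg fun h => by simpa using mem_powerset.mp hR h.2.1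
  rw [hlast, zero_add, rightEndSum, leftEndSum, mul_sum, ← sum_add_distrib]
  refine sum_congr rfl fun R hR => ?_
  have hsub := mem_powerset.mp hR
  have hNR : N ∉ R := fun h => by simpa using hsub h
  rw [turnsOf_succ_insert hN hsub, card_insert_of_notMem hNR]
  by_cases h0 : 0 ∈ R <;> by_cases hm : N - 1 ∈ R <;>
    simp [*, show 0 ≠ N by omega, pow_succ, mul_comm]

lemma leftEndSum_succ (z : ℂ) {N : ℕ} (hN : N ≠ 0) (p : ℕ) :
    leftEndSum z (N + 1) p = leftEndSum z N p + z * rightEndSum z N p := by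
  rw [leftEndSum, range_add_one, sum_powerset_insert notMem_range_self]
  have hlast : ∑ R ∈ (range N).powerset, (if 0 ∈ insert N R ∧ N + 1 - 1 ∉ insert N R ∧
      #(insert N R) = p then z ^ turnsOf (N + 1) (insert N R) else 0) = 0 :=
    sum_eq_zero fun R _ => if_neg fun h => by simp at h
  rw [hlast, add_zero, rightEndSum, leftEndSum, mul_sum, ← sum_add_distrib]
  refine sum_congr rfl fun R hR => ?_
  have hsub := mem_powerset.mp hR
  have hNR : N ∉ R := fun h => by simpa using hsub h
  rw [turnsOf_succ hN hsub]
  by_cases h0 : 0 ∈ R <;> by_cases hm : N - 1 ∈ R <;>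
    simp [*, pow_succ, mul_comm]

theorem endSums_eq_eval (z : ℂ) (w : ℝ) (hz : z ^ 2 = w) (N : ℕ) :
    ∀ p q, p + q = N → rightEndSum z N p = (evenTurnsPoly p q).eval w ∧
      leftEndSum z N p = z * (oddTurnsPoly p q).eval w := by
  induction N with
  | zero =>
    intro p q h
    obtain rfl : p = 0 := by omega
    simp [rightEndSum_zero_right, leftEndSum_zero_right]
  | succ N ih =>
    intro p q hpq
    rcases eq_or_ne N 0 with rfl | hN
    · rcases p with _ | _ | p
      · simp [rightEndSum_zero_right, leftEndSum_zero_right]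
      · obtain rfl : q = 0 := by omega
        simp [rightEndSum_one, leftEndSum_one, evenTurnsPoly_succ_zero]
      · omega
    constructor
    · rcases p with _ | p
      · simp [rightEndSum_zero_right]
      obtain ⟨hR, hL⟩ := ih p q (by omega)
      rw [rightEndSum_succ_succ z hN, hR, hL, evenTurnsPoly_succ_left (by omega), eval_add,
        eval_mul, eval_X]
      push_cast
      linear_combination (((oddTurnsPoly p q).eval w : ℝ) : ℂ) * hz
    · rcases q with _ | q
      · rw [show p = N + 1 by omega, leftEndSum_self]
        simp
      obtain ⟨hR, hL⟩ := ih p q (by omega)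
      rw [leftEndSum_succ z hN, hR, hL, oddTurnsPoly_succ_right, eval_add]
      push_cast
      ring

lemma waveA_eq_eval (μ : ℝ) (p q : ℕ) :
    waveA ((p : ℤ) - q) (p + q) μ = ((1 + μ ^ 2) ^ ((1 - ((p + q : ℕ) : ℝ)) / 2) : ℝ) * I *
      ((evenTurnsPoly p q).eval (-μ ^ 2) + -I * μ * (oddTurnsPoly p q).eval (-μ ^ 2)) := by
  have hz : (-I * μ) ^ 2 = ((-μ ^ 2 : ℝ) : ℂ) := by
    push_cast
    linear_combination (μ : ℂ) ^ 2 * I_sq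
  obtain ⟨hR, hL⟩ := endSums_eq_eval (-I * μ) (-μ ^ 2) hz (p + q) p q rfl
  rw [waveA, ← hR, ← hL, rightEndSum, leftEndSum, ← sum_add_distrib]
  congr 1
  refine sum_congr rfl fun R _ => ?_
  have hcard : 2 * (#R : ℤ) - ((p + q : ℕ) : ℤ) = p - q ↔ #R = p := by omega
  simp only [hcard]
  by_cases h0 : 0 ∈ R <;> by_cases hm : p + q - 1 ∈ R <;> simp [*]

lemma re_waveA {μ : ℝ} {x : ℤ} {N p q : ℕ} (hN : p + q = N) (hx : (p : ℤ) - q = x) :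
    (waveA x N μ).re =
      (1 + μ ^ 2) ^ ((1 - (N : ℝ)) / 2) * (μ * (oddTurnsPoly p q).eval (-μ ^ 2)) := by
  subst hN hx
  simp [waveA_eq_eval]

lemma im_waveA {μ : ℝ} {x : ℤ} {N p q : ℕ} (hN : p + q = N) (hx : (p : ℤ) - q = x) :
    (waveA x N μ).im = (1 + μ ^ 2) ^ ((1 - (N : ℝ)) / 2) * (evenTurnsPoly p q).eval (-μ ^ 2) := by
  subst hN hx
  simp [waveA_eq_eval]

lemma waveA_eq_zero {μ : ℝ} {x : ℤ} {N : ℕ} (h : ∀ p q : ℕ, p + q = N → (p : ℤ) - q ≠ x) :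
    waveA x N μ = 0 := by
  rw [waveA, sum_eq_zero, mul_zero]
  intro R hR
  have hcard : #R ≤ N := by simpa using card_le_card (mem_powerset.mp hR)
  exact if_neg fun ⟨_, hx⟩ => h #R (N - #R) (by omega) (by omega)

lemma re_waveA_eq_zero {μ : ℝ} {x : ℤ} {N : ℕ}
    (h : ∀ p q : ℕ, p + q = N → (p : ℤ) - q = x → p = 0 ∨ q = 0) : (waveA x N μ).re = 0 := by
  by_cases hx : ∃ p q : ℕ, p + q = N ∧ (p : ℤ) - q = x
  · obtain ⟨p, q, hN, hx⟩ := hx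
    rw [re_waveA hN hx]
    rcases h p q hN hx with rfl | rfl <;> simp
  · rw [waveA_eq_zero fun p q hN hx' => hx ⟨p, q, hN, hx'⟩, zero_re]

lemma im_waveA_eq_zero {μ : ℝ} {x : ℤ} {N : ℕ}
    (h : ∀ p q : ℕ, p + q = N → (p : ℤ) - q = x → p = 0) : (waveA x N μ).im = 0 := by
  by_cases hx : ∃ p q : ℕ, p + q = N ∧ (p : ℤ) - q = x
  · obtain ⟨p, q, hN, hx⟩ := hx
    rw [im_waveA hN hx, h p q hN hx]
    simp
  · rw [waveA_eq_zero fun p q hN hx' => hx ⟨p, q, hN, hx'⟩, zero_im]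

theorem re_waveA_three_term (μ : ℝ) (n : ℕ) (x : ℤ) :
    ((x : ℝ) + 1) * (((x : ℝ) - 1) ^ 2 - (n : ℝ) ^ 2) * (waveA (x - 2) (n + 1) μ).re +
        ((x : ℝ) - 1) * (((x : ℝ) + 1) ^ 2 - (n : ℝ) ^ 2) * (waveA (x + 2) (n + 1) μ).re =
      2 * (x : ℝ) * ((1 + 2 * μ ^ 2) * ((x : ℝ) ^ 2 - 1) - (n : ℝ) ^ 2) *
        (waveA x (n + 1) μ).re := by
  by_cases hx : ∃ p q : ℕ, p + q = n + 1 ∧ (p : ℤ) - q = x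
  · obtain ⟨p, q, hN, rfl⟩ := hx
    set c : ℝ := (1 + μ ^ 2) ^ ((1 - ((n + 1 : ℕ) : ℝ)) / 2)
    have hleft : (waveA ((p : ℤ) - q - 2) (n + 1) μ).re =
        c * (μ * (oddTurnsPoly (p - 1) (q + 1)).eval (-μ ^ 2)) := by
      rcases p with _ | p
      · rw [re_waveA_eq_zero fun _ _ _ _ => by omega]
        simp
      · exact re_waveA (by omega) (by push_cast; ring)
    have hright : (waveA ((p : ℤ) - q + 2) (n + 1) μ).re =
        c * (μ * (oddTurnsPoly (p + 1) (q - 1)).eval (-μ ^ 2)) := by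
      rcases q with _ | q
      · rw [re_waveA_eq_zero fun _ _ _ _ => by omega]
        simp
      · exact re_waveA (by omega) (by push_cast; ring)
    have hK := congrArg (eval (-μ ^ 2)) (oddTurnsPoly_three_term p q)
    simp only [eval_add, eval_mul, eval_C, eval_X] at hK
    have hn : (n : ℝ) = p + q - 1 := by
      have := congrArg (Nat.cast : ℕ → ℝ) hN
      push_cast at this
      linarith
    have hcentre : (waveA ((p : ℤ) - q) (n + 1) μ).re =
        c * (μ * (oddTurnsPoly p q).eval (-μ ^ 2)) := re_waveA hN rfl
    rw [hleft, hright, hcentre, hn]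
    push_cast
    linear_combination (-4 * c * μ) * hK
  · have hleft : (waveA (x - 2) (n + 1) μ).re = 0 := re_waveA_eq_zero fun p q h h' => by
      by_contra hpq
      exact hx ⟨p + 1, q - 1, by omega, by omega⟩
    have hright : (waveA (x + 2) (n + 1) μ).re = 0 := re_waveA_eq_zero fun p q h h' => by
      by_contra hpq
      exact hx ⟨p - 1, q + 1, by omega, by omega⟩
    have hcentre : (waveA x (n + 1) μ).re = 0 :=
      re_waveA_eq_zero fun p q h h' => (hx ⟨p, q, h, h'⟩).elim
    rw [hleft, hright, hcentre]
    ring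

theorem im_waveA_three_term (μ : ℝ) (n : ℕ) (x : ℤ) :
    ((x : ℝ) + 1) * (((x : ℝ) - 1) ^ 2 - ((n : ℝ) + 1) ^ 2) * (waveA (x - 1) (n + 1) μ).im +
        ((x : ℝ) - 1) * (((x : ℝ) + 1) ^ 2 - ((n : ℝ) - 1) ^ 2) * (waveA (x + 3) (n + 1) μ).im =
      2 * (x : ℝ) * ((1 + 2 * μ ^ 2) * ((x : ℝ) ^ 2 - 1) - (n : ℝ) ^ 2 + 1) *
        (waveA (x + 1) (n + 1) μ).im := by
  by_cases hx : ∃ p q : ℕ, p + q = n + 1 ∧ (p : ℤ) - q = x + 1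
  · obtain ⟨p, _ | q, hN, hpq⟩ := hx
    · obtain rfl : x = n := by omega
      rw [im_waveA_eq_zero (x := n + 3) fun _ _ _ _ => by omega,
        im_waveA (p := n) (q := 1) rfl (by ring), im_waveA (p := n + 1) (q := 0) rfl (by simp)]
      rcases n with _ | n
      · simp
      · rw [evenTurnsPoly_succ_one, evenTurnsPoly_succ_zero]
        simp only [eval_mul, eval_C, eval_X, eval_one]
        push_cast [add_zero]
        ring
    set c : ℝ := (1 + μ ^ 2) ^ ((1 - ((n + 1 : ℕ) : ℝ)) / 2)
    have hleft : (waveA (x - 1) (n + 1) μ).im =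
        c * (evenTurnsPoly (p - 1) (q + 1 + 1)).eval (-μ ^ 2) := by
      rcases p with _ | p
      · rw [im_waveA_eq_zero fun _ _ _ _ => by omega]
        simp
      · exact im_waveA (by omega) (by push_cast at hpq ⊢; omega)
    have hJ := congrArg (eval (-μ ^ 2)) (evenTurnsPoly_three_term p (q + 1) (by omega))
    simp only [eval_add, eval_mul, eval_C, eval_X, Nat.add_sub_cancel] at hJ
    have hn : (n : ℝ) = p + q := by
      have := congrArg (Nat.cast : ℕ → ℝ) hN
      push_cast at this
      linarith
    have hxr : (x : ℝ) = p - q - 2 := by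
      have := congrArg (Int.cast : ℤ → ℝ) hpq
      push_cast at this
      linarith
    have hright : (waveA (x + 3) (n + 1) μ).im = c * (evenTurnsPoly (p + 1) q).eval (-μ ^ 2) :=
      im_waveA (by omega) (by push_cast at hpq ⊢; omega)
    have hcentre : (waveA (x + 1) (n + 1) μ).im = c * (evenTurnsPoly p (q + 1)).eval (-μ ^ 2) :=
      im_waveA hN hpq
    rw [hleft, hright, hcentre, hn, hxr]
    push_cast at hJ ⊢
    linear_combination (-4 * c) * hJ
  · rw [im_waveA_eq_zero (x := x + 1) fun p q h h' => (hx ⟨p, q, h, h'⟩).elim,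
      im_waveA_eq_zero (x := x + 3) fun p q h h' => by
        by_contra hp
        exact hx ⟨p - 1, q + 1, by omega, by omega⟩]
    rcases eq_or_ne x (n + 2) with rfl | hx2
    · push_cast
      ring
    · rw [im_waveA_eq_zero (x := x - 1) fun p q h h' => ?_]
      · ring
      rcases q with _ | q
      · omega
      · exact (hx ⟨p + 1, q, by omega, by omega⟩).elim

lemma wf_intCast_mul {ε : ℝ} (hε : 0 < ε) (m : ℝ) (x : ℤ) (n : ℕ) :
    wf (x * ε) (n * ε + ε) m ε = waveA x (n + 1) (m * ε) := by
  have ht : ((n : ℝ) * ε + ε) / ε = ((n + 1 : ℕ) : ℤ) := by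
    field_simp
    push_cast
    ring
  rw [wf, mul_div_cancel_right₀ _ hε.ne', ht, Int.floor_intCast, Int.floor_intCast,
    Int.toNat_natCast]

lemma a1_intCast_mul {ε : ℝ} (hε : 0 < ε) (m : ℝ) (x : ℤ) (n : ℕ) :
    a1 (x * ε) (n * ε) m ε = (waveA x (n + 1) (m * ε)).re := by
  rw [a1, wf_intCast_mul hε]

lemma a2_intCast_mul {ε : ℝ} (hε : 0 < ε) (m : ℝ) (x : ℤ) (n : ℕ) :
    a2 (x * ε) (n * ε) m ε = (waveA (x + 1) (n + 1) (m * ε)).im := by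
  rw [a2, show (x : ℝ) * ε + ε = ((x + 1 : ℤ) : ℝ) * ε by push_cast; ring, wf_intCast_mul hε]

end FeynmanCheckers

theorem stmt16_general (m ε : ℝ) (hε : 0 < ε) (X T : ℤ) (hT : (0 : ℝ) < (T : ℝ) * ε) :
    (letI x : ℝ := (X : ℝ) * ε; letI t : ℝ := (T : ℝ) * ε;
      (x + ε) * ((x - ε) ^ 2 - t ^ 2) * a1 (x - 2 * ε) t m ε +
        (x - ε) * ((x + ε) ^ 2 - t ^ 2) * a1 (x + 2 * ε) t m ε =
      2 * x * ((1 + 2 * m ^ 2 * ε ^ 2) * (x ^ 2 - ε ^ 2) - t ^ 2) * a1 x t m ε) ∧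
    (letI x : ℝ := (X : ℝ) * ε; letI t : ℝ := (T : ℝ) * ε;
      (x + ε) * ((x - ε) ^ 2 - (t + ε) ^ 2) * a2 (x - 2 * ε) t m ε +
        (x - ε) * ((x + ε) ^ 2 - (t - ε) ^ 2) * a2 (x + 2 * ε) t m ε =
      2 * x * ((1 + 2 * m ^ 2 * ε ^ 2) * (x ^ 2 - ε ^ 2) - t ^ 2 + ε ^ 2) * a2 x t m ε) := by
  obtain ⟨n, rfl⟩ : ∃ n : ℕ, T = n := Int.eq_ofNat_of_zero_le (by
    have := pos_of_mul_pos_left hT hε.le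
    exact_mod_cast this.le)
  have hleft : (X : ℝ) * ε - 2 * ε = ((X - 2 : ℤ) : ℝ) * ε := by push_cast; ring
  have hright : (X : ℝ) * ε + 2 * ε = ((X + 2 : ℤ) : ℝ) * ε := by push_cast; ring
  have hre := FeynmanCheckers.re_waveA_three_term (m * ε) n X
  have him := FeynmanCheckers.im_waveA_three_term (m * ε) n X
  rw [show X - 1 = X - 2 + 1 by ring, show X + 3 = X + 2 + 1 by ring] at him
  simp only [Int.cast_natCast, hleft, hright, FeynmanCheckers.a1_intCast_mul hε,
    FeynmanCheckers.a2_intCast_mul hε]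
  constructor
  · linear_combination ε ^ 3 * hre
  · linear_combination ε ^ 3 * him

theorem stmt16 (m ε : ℝ) (hm : 0 ≤ m) (hε : 0 < ε) (X T : ℤ) (hT : (0 : ℝ) < (T : ℝ) * ε) :
    (letI x : ℝ := (X : ℝ) * ε; letI t : ℝ := (T : ℝ) * ε;
      (x + ε) * ((x - ε) ^ 2 - t ^ 2) * a1 (x - 2 * ε) t m ε +
        (x - ε) * ((x + ε) ^ 2 - t ^ 2) * a1 (x + 2 * ε) t m ε =
      2 * x * ((1 + 2 * m ^ 2 * ε ^ 2) * (x ^ 2 - ε ^ 2) - t ^ 2) * a1 x t m ε) ∧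
    (letI x : ℝ := (X : ℝ) * ε; letI t : ℝ := (T : ℝ) * ε;
      (x + ε) * ((x - ε) ^ 2 - (t + ε) ^ 2) * a2 (x - 2 * ε) t m ε +
        (x - ε) * ((x + ε) ^ 2 - (t - ε) ^ 2) * a2 (x + 2 * ε) t m ε =
      2 * x * ((1 + 2 * m ^ 2 * ε ^ 2) * (x ^ 2 - ε ^ 2) - t ^ 2 + ε ^ 2) * a2 x t m ε) :=
  stmt16_general m ε hε X T hT
end

section
/- For every fixed integer x, the limit of θ(x, t, 1, 1) − π(t+1)/4 as t → ∞ over integers t with |x|/t < 1/√2 equals 0; that is, t·arcsin(t/√(2(t² − x²))) − x·arcsin(x/√(t² − x²)) + π/4 − π(t+1)/4 → 0 as t → ∞. -/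
/-!
With `c = x²` and `f s = arcsin (√(2 (1 - c s²)))⁻¹` one has
`t / √(2 (t² - c)) = (√(2 (1 - c t⁻²)))⁻¹` and `f 0 = π / 4`, so the leading term is
`t · (f t⁻¹ - f 0) + π t / 4`. As a differentiable function of `s²`, `f` has `f' 0 = 0`, hence
`t · (f t⁻¹ - f 0) → 0`; and `x · arcsin (x / √(t² - c)) → 0` because the argument of
`arcsin` tends to `0`.
-/

open Real Filter Topology

lemma tendsto_mul_sub_inv_of_hasDerivAt {f : ℝ → ℝ} {f' : ℝ} (hf : HasDerivAt f f' 0) :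
    Tendsto (fun t : ℝ => t * (f t⁻¹ - f 0)) atTop (𝓝 f') := by
  have hinv : Tendsto (fun t : ℝ => t⁻¹) atTop (𝓝[≠] 0) :=
    tendsto_nhdsWithin_mono_right (fun _ h => ne_of_gt h) tendsto_inv_atTop_nhdsGT_zero
  refine ((hasDerivAt_iff_tendsto_slope.mp hf).comp hinv).congr' ?_
  filter_upwards [eventually_ne_atTop 0] with t ht
  simp [slope_def_field, mul_comm]

lemma arcsin_inv_sqrt_two : arcsin (√2)⁻¹ = π / 4 := by
  have hsin : (√2)⁻¹ = sin (π / 4) := by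
    rw [sin_pi_div_four]
    field_simp
    simp
  rw [hsin, arcsin_sin (by linarith [pi_pos]) (by linarith [pi_pos])]

lemma hasDerivAt_arcsin_inv_sqrt_two_mul_one_sub_mul_sq (c : ℝ) :
    HasDerivAt (fun s : ℝ => arcsin (√(2 * (1 - c * s ^ 2)))⁻¹) 0 0 := by
  have hmem : (√2)⁻¹ ≠ -1 ∧ (√2)⁻¹ ≠ 1 := by
    have hpos : 0 < (√2)⁻¹ := by positivity
    exact ⟨by linarith, (inv_lt_one_of_one_lt₀ one_lt_sqrt_two).ne⟩
  have hg : DifferentiableAt ℝ (fun u : ℝ => arcsin (√(2 * (1 - u)))⁻¹) 0 := by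
    refine (differentiableAt_arcsin.2 ?_).comp 0
      ((DifferentiableAt.sqrt (by fun_prop) (by norm_num)).inv (by norm_num))
    simpa using hmem
  have hsq : HasDerivAt (fun s : ℝ => c * s ^ 2) 0 0 := by
    simpa using (hasDerivAt_pow 2 (0 : ℝ)).const_mul c
  simpa [Function.comp_def] using hg.hasDerivAt.comp_of_eq 0 hsq (by simp)

lemma inv_sqrt_two_mul_one_sub_mul_inv_sq (c : ℝ) {t : ℝ} (ht : 0 < t) :
    (√(2 * (1 - c * t⁻¹ ^ 2)))⁻¹ = t / √(2 * (t ^ 2 - c)) := by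
  have : 2 * (1 - c * t⁻¹ ^ 2) = 2 * (t ^ 2 - c) / t ^ 2 := by field_simp
  rw [this, sqrt_div' _ (sq_nonneg t), sqrt_sq ht.le, inv_div]

lemma tendsto_arcsin_div_sqrt_sq_sub (a c : ℝ) :
    Tendsto (fun t : ℝ => arcsin (a / √(t ^ 2 - c))) atTop (𝓝 0) := by
  have hsqrt : Tendsto (fun t : ℝ => √(t ^ 2 - c)) atTop atTop :=
    tendsto_sqrt_atTop.comp <| tendsto_atTop_add_const_right _ _ (tendsto_pow_atTop two_ne_zero)
  simpa [Function.comp_def] using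
    (continuous_arcsin.tendsto 0).comp (tendsto_const_nhds.div_atTop hsqrt)

lemma tendsto_theta_one_one_sub (x : ℝ) :
    Tendsto (fun t : ℝ => t * arcsin (t / √(2 * (t ^ 2 - x ^ 2))) -
      x * arcsin (x / √(t ^ 2 - x ^ 2)) + π / 4 - π * (t + 1) / 4) atTop (𝓝 0) := by
  have hlead := tendsto_mul_sub_inv_of_hasDerivAt
    (hasDerivAt_arcsin_inv_sqrt_two_mul_one_sub_mul_sq (x ^ 2))
  have hcorr := (tendsto_arcsin_div_sqrt_sq_sub x (x ^ 2)).const_mul x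
  rw [mul_zero] at hcorr
  have hsum := hlead.sub hcorr
  rw [sub_zero] at hsum
  refine hsum.congr' ?_
  filter_upwards [eventually_gt_atTop 0] with t ht
  simp only [inv_sqrt_two_mul_one_sub_mul_inv_sq _ ht]
  norm_num [arcsin_inv_sqrt_two]
  ring

theorem stmt18 (x : ℤ) :
    Filter.Tendsto
      (fun t : ℕ =>
        (t : ℝ) * Real.arcsin ((t : ℝ) / Real.sqrt (2 * ((t : ℝ) ^ 2 - (x : ℝ) ^ 2))) -
          (x : ℝ) * Real.arcsin ((x : ℝ) / Real.sqrt ((t : ℝ) ^ 2 - (x : ℝ) ^ 2)) +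
          π / 4 - π * ((t : ℝ) + 1) / 4)
      Filter.atTop (nhds 0) :=
  (tendsto_theta_one_one_sub x).comp tendsto_natCast_atTop_atTop
end
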